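/- arXiv:1905.07311 — 3 statements merged into one kernel-verified Lean document; each statement's English description precedes it below -/
import Mathlib

section
/- Let X be a d-mode tensor in ℝ^{I₁×⋯×I_d} and let Π₁,…,Π_d with Π_j ∈ ℝ^{I_j×I_j} be orthogonal projectors (symmetric idempotent matrices). Then ‖X − X ×₁ Π₁ ×₂ Π₂ ⋯ ×_d Π_d‖_F² = Σ_{j=1}^d ‖X ×₁ Π₁ ⋯ ×_{j−1} Π_{j−1} ×_j (I − Π_j)‖_F², and this quantity is at most Σ_{j=1}^d ‖X − X ×_j Π_j‖_F². -/
open MeasureTheory ProbabilityTheory BigOperators Matrix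

noncomputable section

/-- A `d`-mode tensor with dimensions `I 0 × ⋯ × I (d-1)`. -/
abbrev Tensor (d : ℕ) (I : Fin d → ℕ) : Type := (∀ j, Fin (I j)) → ℝ

namespace Tensor

variable {d : ℕ} {I J : Fin d → ℕ}

/-- Square of the Frobenius norm of a tensor. -/
def frobSq (X : Tensor d I) : ℝ := ∑ i, (X i) ^ 2

/-- Frobenius norm of a tensor. -/
def frobNorm (X : Tensor d I) : ℝ := Real.sqrt (frobSq X)

/-- Mode-`j` product of a tensor with a square matrix `A ∈ ℝ^{I_j × I_j}`. -/
def modeMul (X : Tensor d I) (j : Fin d) (A : Matrix (Fin (I j)) (Fin (I j)) ℝ) :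
    Tensor d I :=
  fun i => ∑ k, A (i j) k * X (Function.update i j k)

/-- `modeMulFirst X A t = X ×₁ A₁ ×₂ A₂ ⋯ ×ₜ Aₜ` (the first `t` modes, square matrices). -/
def modeMulFirst (X : Tensor d I) (A : ∀ j, Matrix (Fin (I j)) (Fin (I j)) ℝ) : ℕ → Tensor d I
  | 0 => X
  | t + 1 =>
    if h : t < d then modeMul (modeMulFirst X A t) ⟨t, h⟩ (A ⟨t, h⟩)
    else modeMulFirst X A t

/-- Simultaneous mode product in every mode: `multiMul G A = G ×₁ A₁ ⋯ ×_d A_d`,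
where `A j ∈ ℝ^{I_j × J_j}` and `G` has dimensions `J`. -/
def multiMul (G : Tensor d J) (A : ∀ j, Matrix (Fin (I j)) (Fin (J j)) ℝ) : Tensor d I :=
  fun i => ∑ k : ∀ j, Fin (J j), (∏ j, A j (i j) (k j)) * G k

/-- Mode-`j` unfolding of a tensor, as a matrix with rows indexed by `Fin (I j)` and
columns indexed by the remaining modes. -/
def unfold (X : Tensor d I) (j : Fin d) :
    Matrix (Fin (I j)) (∀ k : {k : Fin d // k ≠ j}, Fin (I k.1)) ℝ :=
  Matrix.of fun a b => X fun k => if h : k = j then Fin.cast (congrArg I h.symm) a else b ⟨k, h⟩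

end Tensor

/-- `singularValues A i` is the `(i+1)`-st largest singular value of `A`
(0-based indexing; `0` when `i` exceeds the number of rows). -/
def singularValues {m n : Type*} [Fintype m] [Fintype n] [DecidableEq m]
    (A : Matrix m n ℝ) : ℕ → ℝ := fun i =>
  if h : i < Fintype.card m then
    let ev : Fin (Fintype.card m) → ℝ :=
      (Matrix.isHermitian_mul_conjTranspose_self A).eigenvalues ∘ (Fintype.equivFin m).symm
    Real.sqrt ((ev ∘ Tuple.sort ev) ⟨Fintype.card m - 1 - i, by omega⟩)
  else 0

/-- Spectral norm (largest singular value). -/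
def specNorm {m n : Type*} [Fintype m] [Fintype n] [DecidableEq m]
    (A : Matrix m n ℝ) : ℝ := singularValues A 0

/-- Square of the Frobenius norm of a matrix. -/
def matFrobSq {m n : Type*} [Fintype m] [Fintype n] (M : Matrix m n ℝ) : ℝ :=
  ∑ i, ∑ j, (M i j) ^ 2

/-- Frobenius norm of a matrix. -/
def matFrobNorm {m n : Type*} [Fintype m] [Fintype n] (M : Matrix m n ℝ) : ℝ :=
  Real.sqrt (matFrobSq M)

/-- A rectangular "diagonal" matrix with entries `s 0, s 1, …` placed along the diagonal
determined by the chosen enumerations of the index types. -/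
def diagMat (m n : Type*) [Fintype m] [Fintype n] (s : ℕ → ℝ) : Matrix m n ℝ :=
  Matrix.of fun a b =>
    if (Fintype.equivFin m a : ℕ) = (Fintype.equivFin n b : ℕ) then s (Fintype.equivFin m a)
    else 0

/-- `IsSVD M U s V` : `M = U Σ Vᵀ` is a singular value decomposition of `M`, with `U, V`
orthogonal and the singular values `s` nonnegative and arranged in decreasing order. -/
def IsSVD {m n : Type*} [Fintype m] [Fintype n] [DecidableEq m] [DecidableEq n]
    (M : Matrix m n ℝ) (U : Matrix m m ℝ) (s : ℕ → ℝ) (V : Matrix n n ℝ) : Prop :=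
  Uᵀ * U = 1 ∧ Vᵀ * V = 1 ∧ Antitone s ∧ (∀ i, 0 ≤ s i) ∧
    (∀ i, min (Fintype.card m) (Fintype.card n) ≤ i → s i = 0) ∧
    M = U * diagMat m n s * Vᵀ

/-- `B` is the rank-`r` truncated SVD of `M`: it is obtained from an SVD of `M` by
retaining only the `r` largest singular values. -/
def IsSVDTruncation {m n : Type*} [Fintype m] [Fintype n] [DecidableEq m] [DecidableEq n]
    (M : Matrix m n ℝ) (r : ℕ) (B : Matrix m n ℝ) : Prop :=
  ∃ U s V, IsSVD M U s V ∧ B = U * diagMat m n (fun i => if i < r then s i else 0) * Vᵀ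

/-- `A` consists of the first `r` left singular vectors of `M` (the columns of the
orthogonal factor `U` of an SVD of `M` corresponding to the `r` largest singular values). -/
def IsTopLeftSingVecs {m n : Type*} [Fintype m] [Fintype n] [DecidableEq m] [DecidableEq n]
    (M : Matrix m n ℝ) (r : ℕ) (A : Matrix m (Fin r) ℝ) : Prop :=
  ∃ U s V, IsSVD M U s V ∧ ∃ h : r ≤ Fintype.card m,
    ∀ (a : m) (k : Fin r), A a k = U a ((Fintype.equivFin m).symm (Fin.castLE h k))

/-- Column space of a matrix. -/
def colSpace {m n : Type*} [Fintype n] (M : Matrix m n ℝ) : Submodule ℝ (m → ℝ) :=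
  LinearMap.range M.mulVecLin

/-- `Xopt` is a best multilinear rank-`r` approximation of `X` in the Frobenius norm. -/
def IsBestRankApprox {d : ℕ} {I : Fin d → ℕ} (X : Tensor d I) (r : Fin d → ℕ)
    (Xopt : Tensor d I) : Prop :=
  (∀ j, (Tensor.unfold Xopt j).rank ≤ r j) ∧
    ∀ Y : Tensor d I, (∀ j, (Tensor.unfold Y j).rank ≤ r j) →
      Tensor.frobNorm (X - Xopt) ≤ Tensor.frobNorm (X - Y)

/-- `P` is a selection operator: its columns are distinct columns of the identity matrix. -/
def IsSelection {a b : Type*} [DecidableEq a] (P : Matrix a b ℝ) : Prop :=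
  ∃ f : b → a, Function.Injective f ∧ ∀ i k, P i k = if i = f k then 1 else 0

section STHOSVD

variable {d : ℕ}

/-- Dimensions of the partially truncated core tensor in the STHOSVD with processing
order `[0, 1, …, d-1]`: after processing the first `t` modes, mode `k` has dimension
`r k` for `k < t` and `I k` otherwise. -/
def stDims (I r : Fin d → ℕ) (t : ℕ) : Fin d → ℕ := fun k => if (k : ℕ) < t then r k else I k

theorem stDims_lt {I r : Fin d → ℕ} {t : ℕ} {k : Fin d} (h : (k : ℕ) < t) :
    stDims I r t k = r k := if_pos h

theorem stDims_ge {I r : Fin d → ℕ} {t : ℕ} {k : Fin d} (h : ¬ (k : ℕ) < t) :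
    stDims I r t k = I k := if_neg h

theorem stDims_self {I r : Fin d → ℕ} (j : Fin d) : stDims I r (j : ℕ) j = I j :=
  stDims_ge (lt_irrefl _)

/-- The partially truncated core tensor `G^{(t)} = X ×₁ A₁ᵀ ⋯ ×ₜ Aₜᵀ` of the STHOSVD
(processing order `[0, …, d-1]`). -/
def stCore {I r : Fin d → ℕ} (X : Tensor d I)
    (A : ∀ j, Matrix (Fin (I j)) (Fin (r j)) ℝ) (t : ℕ) : Tensor d (stDims I r t) :=
  Tensor.multiMul X fun k =>
    if h : (k : ℕ) < t then
      Matrix.reindex (finCongr (stDims_lt h).symm) (Equiv.refl _) (A k)ᵀ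
    else Matrix.reindex (finCongr (stDims_ge h).symm) (Equiv.refl _)
      (1 : Matrix (Fin (I k)) (Fin (I k)) ℝ)

/-- The `t`-th partial approximation `X̂^{(t)} = G^{(t)} ×₁ A₁ ⋯ ×ₜ Aₜ` of the STHOSVD. -/
def stPartial {I r : Fin d → ℕ} (X : Tensor d I)
    (A : ∀ j, Matrix (Fin (I j)) (Fin (r j)) ℝ) (t : ℕ) : Tensor d I :=
  Tensor.multiMul (stCore X A t) fun k =>
    if h : (k : ℕ) < t then
      Matrix.reindex (Equiv.refl _) (finCongr (stDims_lt h).symm) (A k)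
    else Matrix.reindex (Equiv.refl _) (finCongr (stDims_ge h).symm)
      (1 : Matrix (Fin (I k)) (Fin (I k)) ℝ)

/-- Column index type for the mode-`j` unfolding of a tensor with dimensions `I`. -/
abbrev colIdx (I : Fin d → ℕ) (j : Fin d) : Type := ∀ k : {k : Fin d // k ≠ j}, Fin (I k.1)

end STHOSVD

/-- Measurable space structure on matrices (entrywise). -/
instance matrixMeasurableSpace (m n : Type*) : MeasurableSpace (Matrix m n ℝ) :=
  inferInstanceAs (MeasurableSpace (m → n → ℝ))

/-- The distribution of a standard Gaussian random matrix: independent `N(0,1)` entries. -/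
def gaussMat (m n : Type*) [Fintype m] [Fintype n] : Measure (Matrix m n ℝ) :=
  (Measure.pi fun _ : m => Measure.pi fun _ : n => gaussianReal 0 1 :
    Measure (m → n → ℝ))

end

noncomputable section

/-- The structure-preserving STHOSVD approximation `X̂ = G^{(d)} ×₁ A₁ ⋯ ×_d A_d`, where
the core `G^{(d)} = X ×₁ P₁ᵀ ⋯ ×_d P_dᵀ` is built from the selection operators `P j` and
the (not necessarily orthonormal) factor matrices are `A j`. -/
def spApprox {d : ℕ} {I L : Fin d → ℕ} (X : Tensor d I)
    (P : ∀ j, Matrix (Fin (I j)) (Fin (L j)) ℝ)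
    (A : ∀ j, Matrix (Fin (I j)) (Fin (L j)) ℝ) : Tensor d I :=
  Tensor.multiMul (stCore X P d) fun k =>
    Matrix.reindex (Equiv.refl _) (finCongr (stDims_lt k.isLt).symm) (A k)

end
section AuxProj

namespace Tensor
variable {d : ℕ} {I : Fin d → ℕ}

def tdot (A B : Tensor d I) : ℝ := ∑ i, A i * B i

lemma tdot_comm (A B : Tensor d I) : tdot A B = tdot B A := by
  unfold tdot; simp_rw [mul_comm]

lemma frobSq_eq_tdot (A : Tensor d I) : frobSq A = tdot A A := by
  unfold frobSq tdot; simp [sq]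

lemma tdot_self_nonneg (A : Tensor d I) : 0 ≤ tdot A A :=
  Finset.sum_nonneg fun i _ => mul_self_nonneg _

lemma frobSq_nonneg (A : Tensor d I) : 0 ≤ frobSq A := by
  rw [frobSq_eq_tdot]; exact tdot_self_nonneg A

lemma tdot_zero_right (A : Tensor d I) : tdot A 0 = 0 := by simp [tdot]

lemma tdot_add_right (A B C : Tensor d I) : tdot A (B + C) = tdot A B + tdot A C := by
  simp [tdot, mul_add, Finset.sum_add_distrib]

lemma tdot_sum_left {α : Type*} (s : Finset α) (T : α → Tensor d I) (B : Tensor d I) :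
    tdot (∑ j ∈ s, T j) B = ∑ j ∈ s, tdot (T j) B := by
  unfold tdot
  simp_rw [Finset.sum_apply, Finset.sum_mul]
  exact Finset.sum_comm

lemma tdot_sum_right {α : Type*} (s : Finset α) (A : Tensor d I) (T : α → Tensor d I) :
    tdot A (∑ j ∈ s, T j) = ∑ j ∈ s, tdot A (T j) := by
  rw [tdot_comm, tdot_sum_left]
  simp_rw [tdot_comm]

lemma modeMul_one (X : Tensor d I) (j : Fin d) : modeMul X j 1 = X := by
  funext i
  unfold modeMul
  simp [Matrix.one_apply, ite_mul]

lemma modeMul_zero_mat (X : Tensor d I) (j : Fin d) : modeMul X j 0 = 0 := by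
  funext i; simp [modeMul]

lemma modeMul_add_mat (X : Tensor d I) (j : Fin d) (M N : Matrix (Fin (I j)) (Fin (I j)) ℝ) :
    modeMul X j (M + N) = modeMul X j M + modeMul X j N := by
  funext i
  simp [modeMul, Matrix.add_apply, add_mul, Finset.sum_add_distrib]

lemma modeMul_sub_mat (X : Tensor d I) (j : Fin d) (M N : Matrix (Fin (I j)) (Fin (I j)) ℝ) :
    modeMul X j (M - N) = modeMul X j M - modeMul X j N := by
  funext i
  simp [modeMul, Matrix.sub_apply, sub_mul, Finset.sum_sub_distrib]

lemma sum_update_swap (j : Fin d) (f : (∀ k, Fin (I k)) → Fin (I j) → ℝ) :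
    ∑ i, ∑ k, f i k = ∑ i, ∑ k, f (Function.update i j k) (i j) := by
  have hinv : Function.Involutive
      (fun p : (∀ k, Fin (I k)) × Fin (I j) => (Function.update p.1 j p.2, p.1 j)) := by
    intro p
    simp [Function.update_idem, Function.update_eq_self]
  have h := Fintype.sum_equiv hinv.toPerm
      (fun p : (∀ k, Fin (I k)) × Fin (I j) => f (Function.update p.1 j p.2) (p.1 j))
      (fun p : (∀ k, Fin (I k)) × Fin (I j) => f p.1 p.2)
      (fun p => by simp [Function.Involutive.toPerm])
  simpa [Fintype.sum_prod_type] using h.symm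

lemma tdot_modeMul (A B : Tensor d I) (j : Fin d) (M : Matrix (Fin (I j)) (Fin (I j)) ℝ) :
    tdot (modeMul A j M) B = tdot A (modeMul B j Mᵀ) := by
  unfold tdot modeMul
  simp_rw [Finset.sum_mul, Finset.mul_sum]
  rw [sum_update_swap j (fun i k => M (i j) k * A (Function.update i j k) * B i)]
  refine Finset.sum_congr rfl fun i _ => Finset.sum_congr rfl fun k _ => ?_
  simp [Function.update_idem, Function.update_eq_self, Matrix.transpose_apply]
  ring

lemma modeMul_modeMul (X : Tensor d I) (j : Fin d) (M N : Matrix (Fin (I j)) (Fin (I j)) ℝ) :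
    modeMul (modeMul X j M) j N = modeMul X j (N * M) := by
  funext i
  unfold modeMul
  simp_rw [Finset.mul_sum, Matrix.mul_apply, Finset.sum_mul]
  rw [Finset.sum_comm]
  refine Finset.sum_congr rfl fun l _ => Finset.sum_congr rfl fun k _ => ?_
  simp [Function.update_idem]
  ring

lemma modeMul_comm (X : Tensor d I) {j j' : Fin d} (h : j ≠ j')
    (M : Matrix (Fin (I j)) (Fin (I j)) ℝ) (N : Matrix (Fin (I j')) (Fin (I j')) ℝ) :
    modeMul (modeMul X j M) j' N = modeMul (modeMul X j' N) j M := by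
  funext i
  unfold modeMul
  simp_rw [Finset.mul_sum]
  rw [Finset.sum_comm]
  refine Finset.sum_congr rfl fun k _ => Finset.sum_congr rfl fun k' _ => ?_
  rw [Function.update_of_ne h.symm, Function.update_of_ne h,
    Function.update_comm h]
  ring

lemma frobSq_pythagoras (X : Tensor d I) (j : Fin d) (P : Matrix (Fin (I j)) (Fin (I j)) ℝ)
    (hs : Pᵀ = P) (hi : P * P = P) :
    frobSq X = frobSq (modeMul X j P) + frobSq (modeMul X j (1 - P)) := by
  have hQs : (1 - P)ᵀ = 1 - P := by
    rw [Matrix.transpose_sub, Matrix.transpose_one, hs]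
  have hQi : (1 - P) * (1 - P) = 1 - P := by
    rw [Matrix.sub_mul, one_mul, Matrix.mul_sub, Matrix.mul_one, hi, sub_self, sub_zero]
  have h1 : frobSq (modeMul X j P) = tdot X (modeMul X j P) := by
    rw [frobSq_eq_tdot, tdot_modeMul, modeMul_modeMul, hs, hi]
  have h2 : frobSq (modeMul X j (1 - P)) = tdot X (modeMul X j (1 - P)) := by
    rw [frobSq_eq_tdot, tdot_modeMul, modeMul_modeMul, hQs, hQi]
  rw [h1, h2, ← tdot_add_right, ← modeMul_add_mat, add_sub_cancel, modeMul_one,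
    frobSq_eq_tdot]

lemma frobSq_modeMul_le (X : Tensor d I) (j : Fin d) (P : Matrix (Fin (I j)) (Fin (I j)) ℝ)
    (hs : Pᵀ = P) (hi : P * P = P) :
    frobSq (modeMul X j P) ≤ frobSq X := by
  rw [frobSq_pythagoras X j P hs hi]
  have := frobSq_nonneg (modeMul X j (1 - P))
  linarith

lemma tdot_orth (A B : Tensor d I) (j : Fin d) (P : Matrix (Fin (I j)) (Fin (I j)) ℝ)
    (hs : Pᵀ = P) (hi : P * P = P) :
    tdot (modeMul A j (1 - P)) (modeMul B j P) = 0 := by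
  rw [tdot_modeMul, modeMul_modeMul]
  have h0 : (1 - P)ᵀ * P = 0 := by
    rw [Matrix.transpose_sub, Matrix.transpose_one, hs, Matrix.sub_mul, one_mul, hi, sub_self]
  rw [h0, modeMul_zero_mat, tdot_zero_right]

lemma modeMulFirst_succ (X : Tensor d I) (A : ∀ j, Matrix (Fin (I j)) (Fin (I j)) ℝ)
    {t : ℕ} (h : t < d) :
    modeMulFirst X A (t + 1) = modeMul (modeMulFirst X A t) ⟨t, h⟩ (A ⟨t, h⟩) := by
  simp [modeMulFirst, h]


end Tensor

namespace Tensor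
variable {d : ℕ} {I : Fin d → ℕ}

lemma exists_factor (X : Tensor d I) (Proj : ∀ j, Matrix (Fin (I j)) (Fin (I j)) ℝ)
    (j : Fin d) : ∀ t : ℕ, (j : ℕ) < t →
      ∃ W : Tensor d I, modeMulFirst X Proj t = modeMul W j (Proj j) := by
  intro t
  induction t with
  | zero => omega
  | succ t ih =>
    intro hjt
    by_cases ht : t < d
    · rw [modeMulFirst_succ X Proj ht]
      rcases Nat.lt_succ_iff_lt_or_eq.mp hjt with hlt | heq
      · obtain ⟨W, hW⟩ := ih hlt
        refine ⟨modeMul W ⟨t, ht⟩ (Proj ⟨t, ht⟩), ?_⟩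
        rw [hW, modeMul_comm]
        exact fun h => by simp [Fin.ext_iff] at h; omega
      · have hjeq : (⟨t, ht⟩ : Fin d) = j := by
          apply Fin.ext; simp [← heq]
        subst hjeq
        exact ⟨modeMulFirst X Proj t, rfl⟩
    · have hd : (j : ℕ) < t := lt_of_lt_of_le j.isLt (not_lt.mp ht)
      rw [show modeMulFirst X Proj (t+1) = modeMulFirst X Proj t from dif_neg ht]
      exact ih hd

lemma modeMul_modeMulFirst (X : Tensor d I) (Proj : ∀ j, Matrix (Fin (I j)) (Fin (I j)) ℝ)
    (j : Fin d) (M : Matrix (Fin (I j)) (Fin (I j)) ℝ) :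
    ∀ t : ℕ, t ≤ (j : ℕ) →
      modeMul (modeMulFirst X Proj t) j M = modeMulFirst (modeMul X j M) Proj t := by
  intro t
  induction t with
  | zero => intro _; rfl
  | succ t ih =>
    intro hle
    have ht : t < d := lt_of_lt_of_le (Nat.lt_of_succ_le hle) (Nat.le_of_lt j.isLt)
    rw [modeMulFirst_succ X Proj ht, modeMulFirst_succ (modeMul X j M) Proj ht,
      ← ih (by omega), modeMul_comm]
    exact fun h => by simp [Fin.ext_iff] at h; omega

lemma frobSq_modeMulFirst_le (X : Tensor d I) (Proj : ∀ j, Matrix (Fin (I j)) (Fin (I j)) ℝ)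
    (hsymm : ∀ j, (Proj j)ᵀ = Proj j) (hidem : ∀ j, Proj j * Proj j = Proj j) :
    ∀ t : ℕ, frobSq (modeMulFirst X Proj t) ≤ frobSq X := by
  intro t
  induction t with
  | zero => exact le_refl _
  | succ t ih =>
    by_cases ht : t < d
    · rw [modeMulFirst_succ X Proj ht]
      exact le_trans (frobSq_modeMul_le _ _ _ (hsymm _) (hidem _)) ih
    · show frobSq (modeMulFirst X Proj (t+1)) ≤ _
      rw [show modeMulFirst X Proj (t+1) = modeMulFirst X Proj t from dif_neg ht]
      exact ih

lemma telescope (X : Tensor d I) (Proj : ∀ j, Matrix (Fin (I j)) (Fin (I j)) ℝ) :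
    ∀ t : ℕ, t ≤ d →
      X - modeMulFirst X Proj t =
        ∑ j ∈ Finset.univ.filter (fun j : Fin d => (j : ℕ) < t),
          modeMul (modeMulFirst X Proj (j : ℕ)) j (1 - Proj j) := by
  intro t
  induction t with
  | zero =>
    intro _
    simp [modeMulFirst]
  | succ t ih =>
    intro hle
    have ht : t < d := hle
    have hset : Finset.univ.filter (fun j : Fin d => (j : ℕ) < t + 1)
        = insert ⟨t, ht⟩ (Finset.univ.filter (fun j : Fin d => (j : ℕ) < t)) := by
      ext j
      simp [Fin.ext_iff]
      omega
    have hnot : (⟨t, ht⟩ : Fin d) ∉ Finset.univ.filter (fun j : Fin d => (j : ℕ) < t) := by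
      simp
    rw [hset, Finset.sum_insert hnot, ← ih (le_of_lt hle), modeMulFirst_succ X Proj ht]
    have : modeMul (modeMulFirst X Proj t) ⟨t, ht⟩ (1 - Proj ⟨t, ht⟩)
        = modeMulFirst X Proj t - modeMul (modeMulFirst X Proj t) ⟨t, ht⟩ (Proj ⟨t, ht⟩) := by
      rw [modeMul_sub_mat, modeMul_one]
    rw [this]
    abel

end Tensor


end AuxProj

/-- Lemma on orthogonal projectors, cf. Vannieuwenhoven et al.:
for orthogonal projectors `Proj j`,
`‖X − X ×₁ Proj₁ ⋯ ×_d Proj_d‖_F² = Σ_j ‖X ×₁ Proj₁ ⋯ ×_{j−1} Proj_{j−1} ×_j (I − Proj_j)‖_F²`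
and this quantity is at most `Σ_j ‖X − X ×_j Proj_j‖_F²`. -/
theorem projector_error_splitting
    (d : ℕ) (I : Fin d → ℕ) (X : Tensor d I)
    (Proj : ∀ j, Matrix (Fin (I j)) (Fin (I j)) ℝ)
    (hsymm : ∀ j, (Proj j)ᵀ = Proj j) (hidem : ∀ j, Proj j * Proj j = Proj j) :
    Tensor.frobSq (X - Tensor.modeMulFirst X Proj d) =
      (∑ j : Fin d,
        Tensor.frobSq (Tensor.modeMul (Tensor.modeMulFirst X Proj (j : ℕ)) j (1 - Proj j))) ∧
    Tensor.frobSq (X - Tensor.modeMulFirst X Proj d) ≤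
      ∑ j : Fin d, Tensor.frobSq (X - Tensor.modeMul X j (Proj j)) := by
  classical
  set T : Fin d → Tensor d I :=
    fun j => Tensor.modeMul (Tensor.modeMulFirst X Proj (j : ℕ)) j (1 - Proj j) with hT
  have htel : X - Tensor.modeMulFirst X Proj d = ∑ j : Fin d, T j := by
    have := Tensor.telescope X Proj d le_rfl
    simpa [Finset.filter_true_of_mem, Fin.is_lt] using this
  -- orthogonality
  have horth : ∀ j j' : Fin d, j ≠ j' → Tensor.tdot (T j) (T j') = 0 := by
    have key : ∀ j j' : Fin d, (j : ℕ) < (j' : ℕ) → Tensor.tdot (T j) (T j') = 0 := by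
      intro j j' hlt
      obtain ⟨W, hW⟩ := Tensor.exists_factor X Proj j (j' : ℕ) hlt
      have hTj' : T j' = Tensor.modeMul (Tensor.modeMul W j' (1 - Proj j')) j (Proj j) := by
        rw [hT]
        simp only
        rw [hW, Tensor.modeMul_comm]
        exact fun h => by simp [Fin.ext_iff] at h; omega
      rw [hTj', hT]
      exact Tensor.tdot_orth _ _ j (Proj j) (hsymm j) (hidem j)
    intro j j' hne
    rcases lt_or_gt_of_ne (fun h : (j:ℕ) = (j':ℕ) => hne (Fin.ext h)) with h | h
    · exact key j j' h
    · rw [Tensor.tdot_comm]; exact key j' j h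
  have hsplit : Tensor.frobSq (X - Tensor.modeMulFirst X Proj d) = ∑ j : Fin d, Tensor.frobSq (T j) := by
    rw [htel, Tensor.frobSq_eq_tdot, Tensor.tdot_sum_left]
    refine Finset.sum_congr rfl fun j _ => ?_
    rw [Tensor.tdot_sum_right, Tensor.frobSq_eq_tdot]
    exact Finset.sum_eq_single j (fun b _ hb => horth j b (Ne.symm hb)) (by simp)
  refine ⟨hsplit, ?_⟩
  rw [hsplit]
  apply Finset.sum_le_sum
  intro j _
  have hXQ : X - Tensor.modeMul X j (Proj j) = Tensor.modeMul X j (1 - Proj j) := by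
    rw [Tensor.modeMul_sub_mat, Tensor.modeMul_one]
  rw [hXQ]
  have hcomm := Tensor.modeMul_modeMulFirst X Proj j (1 - Proj j) (j : ℕ) le_rfl
  rw [hT]
  simp only
  rw [hcomm]
  exact Tensor.frobSq_modeMulFirst_le _ Proj hsymm hidem (j : ℕ)
end

section
/- Let X be a d-mode tensor in ℝ^{I₁×⋯×I_d} and let X̂ = G ×₁ A₁ ⋯ ×_d A_d be its rank-(r₁,…,r_d) HOSVD approximation. Then ‖X − X̂‖_F² ≤ Σ_{j=1}^d ‖X ×_j (I − A_j A_jᵀ)‖_F² = Σ_{j=1}^d Σ_{i=r_j+1}^{I_j} σ_i(X_(j))². -/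
open MeasureTheory ProbabilityTheory BigOperators Matrix

/-!
With `P j = A j * (A j)ᵀ`, which is an orthogonal projection because `(A j)ᵀ * A j = 1`, the
HOSVD approximation is `X ×₁ P₁ ⋯ ×_d P_d`. Applying the projections one mode at a time,
`X - Y ×_j P_j = X ×_j (1 - P_j) + (X - Y) ×_j P_j` is an orthogonal splitting and `P_j` is a
contraction, so each mode adds at most `‖X ×_j (1 - P_j)‖²` to the squared error.

For the equality, an SVD `X_(j) = U Σ Vᵀ` gives `X_(j) X_(j)ᵀ = U (Σ Σᵀ) Uᵀ`, hence
`‖(1 - P_j) X_(j)‖² = tr (X_(j) X_(j)ᵀ) - tr ((A j)ᵀ X_(j) X_(j)ᵀ A j)` is the sum of the squared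
singular values beyond the `r j`-th. That these agree with `singularValues` follows by comparing
characteristic polynomials: both are the square roots of the sorted eigenvalues of `X_(j) X_(j)ᵀ`.
-/

section FrobeniusMatrix

variable {m n : Type*} [Fintype m] [Fintype n]

lemma matFrobSq_eq_trace (N : Matrix m n ℝ) : matFrobSq N = trace (N * Nᵀ) := by
  simp [matFrobSq, trace, mul_apply, sq]

lemma matFrobSq_nonneg (N : Matrix m n ℝ) : 0 ≤ matFrobSq N := by
  unfold matFrobSq; positivity

variable [DecidableEq m] {P : Matrix m m ℝ}

lemma matFrobSq_mul_add_one_sub_mul (hP : Pᵀ = P) (hP2 : P * P = P) (A B : Matrix m n ℝ) :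
    matFrobSq (P * A + (1 - P) * B) = matFrobSq (P * A) + matFrobSq ((1 - P) * B) := by
  have hPQ : P * (1 - P) = 0 := by rw [mul_sub, mul_one, hP2, sub_self]
  have hQP : (1 - P) * P = 0 := by rw [sub_mul, one_mul, hP2, sub_self]
  have hcross₁ : trace (P * A * (Bᵀ * (1 - P))) = 0 := by
    rw [trace_mul_comm, ← Matrix.mul_assoc, Matrix.mul_assoc _ (1 - P), hQP, Matrix.mul_zero,
      Matrix.zero_mul, trace_zero]
  have hcross₂ : trace ((1 - P) * B * (Aᵀ * P)) = 0 := by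
    rw [trace_mul_comm, ← Matrix.mul_assoc, Matrix.mul_assoc _ P, hPQ, Matrix.mul_zero,
      Matrix.zero_mul, trace_zero]
  simp only [matFrobSq_eq_trace, transpose_add, transpose_mul, transpose_sub, transpose_one, hP,
    Matrix.add_mul, Matrix.mul_add, trace_add, hcross₁, hcross₂]
  ring

lemma matFrobSq_sub_mul_le (hP : Pᵀ = P) (hP2 : P * P = P) (M N : Matrix m n ℝ) :
    matFrobSq (M - P * N) ≤ matFrobSq ((1 - P) * M) + matFrobSq (M - N) := by
  have hsplit : M - P * N = P * (M - N) + (1 - P) * M := by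
    rw [Matrix.mul_sub, Matrix.sub_mul, Matrix.one_mul]; abel
  have hPyth := matFrobSq_mul_add_one_sub_mul hP hP2 (M - N) (M - N)
  rw [← Matrix.add_mul, add_sub_cancel, Matrix.one_mul] at hPyth
  rw [hsplit, matFrobSq_mul_add_one_sub_mul hP hP2]
  linarith [matFrobSq_nonneg ((1 - P) * (M - N))]

lemma matFrobSq_one_sub_mul_transpose_mul {r : Type*} [Fintype r] [DecidableEq r]
    {A : Matrix m r ℝ} (hA : Aᵀ * A = 1) (M : Matrix m n ℝ) :
    matFrobSq ((1 - A * Aᵀ) * M) = trace (M * Mᵀ) - trace (Aᵀ * (M * Mᵀ) * A) := by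
  have hQ : (1 - A * Aᵀ)ᵀ * (1 - A * Aᵀ) = 1 - A * Aᵀ := by
    simp only [transpose_sub, transpose_one, transpose_mul, transpose_transpose, sub_mul,
      mul_sub, one_mul, mul_one, Matrix.mul_assoc, ← Matrix.mul_assoc Aᵀ A, hA, Matrix.one_mul]
    abel
  calc matFrobSq ((1 - A * Aᵀ) * M)
      = trace ((1 - A * Aᵀ)ᵀ * (1 - A * Aᵀ) * (M * Mᵀ)) := by
        rw [matFrobSq_eq_trace, transpose_mul, ← Matrix.mul_assoc, trace_mul_comm]
        simp only [Matrix.mul_assoc]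
    _ = trace (M * Mᵀ) - trace (Aᵀ * (M * Mᵀ) * A) := by
        rw [hQ, Matrix.sub_mul, Matrix.one_mul, trace_sub, Matrix.mul_assoc,
          trace_mul_comm A]

end FrobeniusMatrix

section SingularValues

variable {m n : Type*} [Fintype m] [Fintype n] [DecidableEq m]

lemma diagMat_mul_transpose {s : ℕ → ℝ}
    (hs : ∀ i, min (Fintype.card m) (Fintype.card n) ≤ i → s i = 0) :
    diagMat m n s * (diagMat m n s)ᵀ = diagonal fun a => s (Fintype.equivFin m a) ^ 2 := by
  ext a a'
  rw [mul_apply, ← (Fintype.equivFin n).symm.sum_comp]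
  simp only [diagMat, transpose_apply, of_apply, Equiv.apply_symm_apply, ite_mul, zero_mul]
  set i := (Fintype.equivFin m a : ℕ)
  set i' := (Fintype.equivFin m a' : ℕ)
  rw [Fin.sum_univ_eq_sum_range (fun q => if i = q then s i * if i' = q then s i' else 0 else 0),
    Finset.sum_ite_eq]
  rcases eq_or_ne a a' with rfl | hne
  · by_cases h : i < Fintype.card n
    · simp [h, i, i', sq]
    · simp [h, i, hs _ (min_le_of_right_le (not_lt.mp h))]
  · simp [hne, hne.symm, i, i', Fin.val_eq_val]

variable [DecidableEq n]

lemma IsSVD.mul_transpose {M : Matrix m n ℝ} {U : Matrix m m ℝ} {s : ℕ → ℝ} {V : Matrix n n ℝ}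
    (h : IsSVD M U s V) :
    M * Mᵀ = U * diagonal (fun a => s (Fintype.equivFin m a) ^ 2) * Uᵀ := by
  obtain ⟨-, hV, -, -, hs, rfl⟩ := h
  rw [← diagMat_mul_transpose hs]
  simp only [transpose_mul, transpose_transpose, Matrix.mul_assoc]
  rw [← Matrix.mul_assoc Vᵀ, hV, Matrix.one_mul]

lemma charpoly_mul_mul_transpose_of_orthogonal {U : Matrix m m ℝ} (hU : Uᵀ * U = 1)
    (B : Matrix m m ℝ) : (U * B * Uᵀ).charpoly = B.charpoly := by
  rw [Matrix.mul_assoc, charpoly_mul_comm, Matrix.mul_assoc, hU, Matrix.mul_one]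

open Polynomial in
lemma Matrix.IsHermitian.eigenvalues₀_eq_of_charpoly_eq {A : Matrix m m ℝ} (hA : A.IsHermitian)
    {g : Fin (Fintype.card m) → ℝ} (hg : Antitone g) (h : A.charpoly = ∏ p, (X - C (g p))) :
    hA.eigenvalues₀ = g := by
  rw [← List.ofFn_inj, ← hA.sort_roots_charpoly_eq_eigenvalues₀, h, roots_prod]
  · simp_rw [roots_X_sub_C, Multiset.bind_singleton, RCLike.re_to_real, Multiset.map_id',
      Fin.univ_val_map, Multiset.coe_sort]
    apply List.mergeSort_of_pairwise
    simp_rw [decide_eq_true_eq, ← List.sortedGE_iff_pairwise]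
    exact hg.sortedGE_ofFn
  · simp [Finset.prod_ne_zero_iff, X_sub_C_ne_zero]

lemma Tuple.comp_sort_eq_comp_rev_of_antitone {α : Type*} [LinearOrder α] {N : ℕ}
    {g : Fin N → α} (hg : Antitone g) :
    g ∘ Tuple.sort g = g ∘ Fin.revPerm :=
  ((Tuple.comp_sort_eq_comp_iff_monotone).mpr (hg.comp Fin.rev_anti)).symm

open Polynomial in
lemma IsSVD.singularValues_eq {M : Matrix m n ℝ} {U : Matrix m m ℝ} {s : ℕ → ℝ}
    {V : Matrix n n ℝ} (h : IsSVD M U s V) {i : ℕ} (hi : i < Fintype.card m) :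
    singularValues M i = s i := by
  have ⟨hU, _, hs_anti, hs_nonneg, _⟩ := h
  have hM := isHermitian_mul_conjTranspose_self M
  have hev : hM.eigenvalues₀ = fun p : Fin _ => s p ^ 2 := by
    refine hM.eigenvalues₀_eq_of_charpoly_eq
      (fun p q hpq => pow_le_pow_left₀ (hs_nonneg _) (hs_anti hpq) 2) ?_
    rw [conjTranspose_eq_transpose_of_trivial, h.mul_transpose,
      charpoly_mul_mul_transpose_of_orthogonal hU, charpoly_diagonal]
    exact Fintype.prod_equiv (Fintype.equivFin m) _ _ fun _ => rfl
  have hsort : (hM.eigenvalues ∘ (Fintype.equivFin m).symm) ∘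
      Tuple.sort (hM.eigenvalues ∘ (Fintype.equivFin m).symm) = hM.eigenvalues₀ ∘ Fin.revPerm := by
    rw [← Tuple.comp_sort_eq_comp_rev_of_antitone hM.eigenvalues₀_antitone]
    exact Tuple.comp_perm_comp_sort_eq_comp_sort (f := hM.eigenvalues₀)
      (σ := (Fintype.equivFin m).symm.trans (Fintype.equivOfCardEq (Fintype.card_fin _)).symm)
  simp only [singularValues, dif_pos hi]
  rw [hsort, hev]
  have hrev :
      (Fin.revPerm (⟨Fintype.card m - 1 - i, by omega⟩ : Fin (Fintype.card m)) : ℕ) = i := by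
    simp only [Fin.revPerm_apply, Fin.val_rev]; omega
  rw [Function.comp_apply, hrev, Real.sqrt_sq (hs_nonneg i)]

end SingularValues

section TopLeftSingularVectors

variable {m n : Type*} [Fintype m] [Fintype n] [DecidableEq m] [DecidableEq n]
  {M : Matrix m n ℝ} {r : ℕ} {A : Matrix m (Fin r) ℝ}

lemma IsTopLeftSingVecs.exists_isSVD_eq_submatrix (h : IsTopLeftSingVecs M r A) :
    ∃ U s V, IsSVD M U s V ∧ ∃ hr : r ≤ Fintype.card m,
      A = U.submatrix id ((Fintype.equivFin m).symm ∘ Fin.castLE hr) := by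
  obtain ⟨U, s, V, hsvd, hr, hA⟩ := h
  exact ⟨U, s, V, hsvd, hr, Matrix.ext hA⟩

lemma IsTopLeftSingVecs.transpose_mul_self (h : IsTopLeftSingVecs M r A) : Aᵀ * A = 1 := by
  obtain ⟨U, s, V, hsvd, hr, rfl⟩ := h.exists_isSVD_eq_submatrix
  rw [transpose_submatrix, ← submatrix_mul _ _ _ _ _ Function.bijective_id, hsvd.1,
    submatrix_one _ ((Fintype.equivFin m).symm.injective.comp (Fin.castLE_injective hr))]

lemma IsTopLeftSingVecs.matFrobSq_one_sub_mul_transpose_mul (h : IsTopLeftSingVecs M r A) :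
    matFrobSq ((1 - A * Aᵀ) * M) =
      ∑ i ∈ Finset.Ico r (Fintype.card m), singularValues M i ^ 2 := by
  rw [_root_.matFrobSq_one_sub_mul_transpose_mul h.transpose_mul_self]
  obtain ⟨U, s, V, hsvd, hr, rfl⟩ := h.exists_isSVD_eq_submatrix
  have hU : Uᵀ * U = 1 := hsvd.1
  set f := (Fintype.equivFin m).symm ∘ Fin.castLE hr
  have hf : Function.Injective f :=
    (Fintype.equivFin m).symm.injective.comp (Fin.castLE_injective hr)
  set D : Matrix m m ℝ := diagonal fun a => s (Fintype.equivFin m a) ^ 2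
  have htrace : trace (U * D * Uᵀ) = ∑ i ∈ Finset.range (Fintype.card m), s i ^ 2 := by
    rw [trace_mul_comm, ← Matrix.mul_assoc, hU, Matrix.one_mul, trace_diagonal,
      ← Fin.sum_univ_eq_sum_range]
    exact Fintype.sum_equiv (Fintype.equivFin m) _ _ fun _ => rfl
  have htrace_top : trace ((U.submatrix id f)ᵀ * (U * D * Uᵀ) * U.submatrix id f) =
      ∑ i ∈ Finset.range r, s i ^ 2 := by
    rw [transpose_submatrix, ← submatrix_id_id (U * D * Uᵀ),
      ← submatrix_mul _ _ _ _ _ Function.bijective_id,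
      ← submatrix_mul _ _ _ _ _ Function.bijective_id]
    have hconj : Uᵀ * (U * D * Uᵀ) * U = D := by
      simp only [← Matrix.mul_assoc, hU, Matrix.one_mul]
      rw [Matrix.mul_assoc, hU, Matrix.mul_one]
    rw [hconj, submatrix_diagonal _ _ hf, trace_diagonal, ← Fin.sum_univ_eq_sum_range]
    simp [f]
  rw [hsvd.mul_transpose, htrace, htrace_top, ← Finset.sum_Ico_eq_sub _ hr]
  exact Finset.sum_congr rfl fun i hi => by
    rw [hsvd.singularValues_eq (Finset.mem_Ico.mp hi).2]

end TopLeftSingularVectors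

lemma Equiv.update_piSplitAt_symm {α : Type*} [DecidableEq α] {β : α → Type*} (i : α)
    (a c : β i) (b : ∀ j : {j // j ≠ i}, β j) :
    Function.update ((piSplitAt i β).symm (a, b)) i c = (piSplitAt i β).symm (c, b) := by
  funext j
  by_cases hj : j = i
  · subst hj; simp
  · simp [hj]

namespace Tensor

variable {d : ℕ} {I : Fin d → ℕ}

lemma unfold_apply (X : Tensor d I) (j : Fin d) (a : Fin (I j)) (b : colIdx I j) :
    unfold X j a b = X ((Equiv.piSplitAt j fun k => Fin (I k)).symm (a, b)) := by
  refine congrArg X (funext fun k => ?_)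
  by_cases hk : k = j
  · subst hk; simp
  · simp [hk]

lemma frobSq_eq_matFrobSq_unfold (X : Tensor d I) (j : Fin d) :
    frobSq X = matFrobSq (unfold X j) := by
  rw [frobSq, ← (Equiv.piSplitAt j fun k => Fin (I k)).symm.sum_comp, Fintype.sum_prod_type]
  simp only [matFrobSq, unfold_apply]

lemma unfold_sub (X Y : Tensor d I) (j : Fin d) :
    unfold (X - Y) j = unfold X j - unfold Y j := rfl

lemma unfold_modeMul (X : Tensor d I) (j : Fin d) (M : Matrix (Fin (I j)) (Fin (I j)) ℝ) :
    unfold (modeMul X j M) j = M * unfold X j := by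
  ext a b
  simp [unfold_apply, modeMul, mul_apply, Equiv.update_piSplitAt_symm]

lemma multiMul_multiMul {J K : Fin d → ℕ} (X : Tensor d K)
    (B : ∀ j, Matrix (Fin (J j)) (Fin (K j)) ℝ) (A : ∀ j, Matrix (Fin (I j)) (Fin (J j)) ℝ) :
    multiMul (multiMul X B) A = multiMul X fun j => A j * B j := by
  funext i
  simp only [multiMul, mul_apply, Finset.mul_sum]
  rw [Finset.sum_comm]
  refine Finset.sum_congr rfl fun k _ => ?_
  rw [Finset.prod_univ_sum, ← Fintype.piFinset_univ, Finset.sum_mul]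
  refine Finset.sum_congr rfl fun l _ => ?_
  rw [Finset.prod_mul_distrib, mul_assoc]

lemma multiMul_one (X : Tensor d I) : multiMul X 1 = X := by
  funext i
  rw [multiMul, Fintype.sum_eq_single i]
  · simp
  · intro k hk
    obtain ⟨l, hl⟩ := Function.ne_iff.mp hk
    rw [Finset.prod_eq_zero (Finset.mem_univ l) (by simp [one_apply, Ne.symm hl]), zero_mul]

lemma multiMul_update (X : Tensor d I) (Q : ∀ j, Matrix (Fin (I j)) (Fin (I j)) ℝ) (j : Fin d)
    (M : Matrix (Fin (I j)) (Fin (I j)) ℝ) :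
    multiMul X (Function.update Q j M) = modeMul (multiMul X (Function.update Q j 1)) j M := by
  funext i
  simp only [multiMul, modeMul, Finset.mul_sum]
  rw [Finset.sum_comm]
  refine Finset.sum_congr rfl fun k _ => ?_
  simp only [← mul_assoc, ← Finset.sum_mul]
  congr 1
  have hrest (c : Fin (I j)) : ∏ l ∈ Finset.univ.erase j,
      Function.update Q j 1 l (Function.update i j c l) (k l) =
        ∏ l ∈ Finset.univ.erase j, Function.update Q j M l (i l) (k l) :=
    Finset.prod_congr rfl fun l hl => by
      simp [Function.update_of_ne (Finset.ne_of_mem_erase hl)]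
  simp_rw [← Finset.mul_prod_erase Finset.univ _ (Finset.mem_univ j), hrest]
  simp [one_apply]

lemma frobSq_sub_modeMul_le (X Y : Tensor d I) (j : Fin d)
    {P : Matrix (Fin (I j)) (Fin (I j)) ℝ} (hP : Pᵀ = P) (hP2 : P * P = P) :
    frobSq (X - modeMul Y j P) ≤ frobSq (modeMul X j (1 - P)) + frobSq (X - Y) := by
  simp only [frobSq_eq_matFrobSq_unfold _ j, unfold_sub, unfold_modeMul]
  exact matFrobSq_sub_mul_le hP hP2 _ _

lemma frobSq_sub_multiMul_piecewise_le (X : Tensor d I)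
    {P : ∀ j, Matrix (Fin (I j)) (Fin (I j)) ℝ} (hP : ∀ j, (P j)ᵀ = P j)
    (hP2 : ∀ j, P j * P j = P j) (s : Finset (Fin d)) :
    frobSq (X - multiMul X (s.piecewise P 1)) ≤ ∑ j ∈ s, frobSq (modeMul X j (1 - P j)) := by
  induction s using Finset.induction_on with
  | empty => simp [multiMul_one, frobSq]
  | insert j s hj ih =>
    have hQj : s.piecewise P 1 j = 1 := Finset.piecewise_eq_of_notMem _ _ _ hj
    rw [Finset.piecewise_insert, multiMul_update, ← hQj, Function.update_eq_self,
      Finset.sum_insert hj]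
    exact (frobSq_sub_modeMul_le _ _ j (hP j) (hP2 j)).trans (by gcongr)

lemma frobSq_sub_multiMul_le (X : Tensor d I)
    {P : ∀ j, Matrix (Fin (I j)) (Fin (I j)) ℝ} (hP : ∀ j, (P j)ᵀ = P j)
    (hP2 : ∀ j, P j * P j = P j) :
    frobSq (X - multiMul X P) ≤ ∑ j, frobSq (modeMul X j (1 - P j)) := by
  simpa using frobSq_sub_multiMul_piecewise_le X hP hP2 Finset.univ

end Tensor

/-- HOSVD error bound: if `X̂ = G ×₁ A₁ ⋯ ×_d A_d` is the rank-`r`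
HOSVD approximation of `X` (each `A j` consists of the first `r j` left singular vectors
of the mode-`j` unfolding of `X`, and `G = X ×₁ A₁ᵀ ⋯ ×_d A_dᵀ`), then
`‖X − X̂‖_F² ≤ Σ_j ‖X ×_j (I − A_j A_jᵀ)‖_F² = Σ_j Σ_{i>r_j} σ_i(X_(j))²`. -/
theorem hosvd_error_bound
    (d : ℕ) (I r : Fin d → ℕ) (X : Tensor d I)
    (A : ∀ j, Matrix (Fin (I j)) (Fin (r j)) ℝ)
    (hA : ∀ j, IsTopLeftSingVecs (Tensor.unfold X j) (r j) (A j)) :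
    Tensor.frobSq (X - Tensor.multiMul (Tensor.multiMul X fun j => (A j)ᵀ) A) ≤
      (∑ j, Tensor.frobSq (Tensor.modeMul X j (1 - A j * (A j)ᵀ))) ∧
    (∑ j, Tensor.frobSq (Tensor.modeMul X j (1 - A j * (A j)ᵀ))) =
      ∑ j, ∑ i ∈ Finset.Ico (r j) (I j), (singularValues (Tensor.unfold X j) i) ^ 2 := by
  refine ⟨?_, Finset.sum_congr rfl fun j _ => ?_⟩
  · rw [Tensor.multiMul_multiMul]
    refine Tensor.frobSq_sub_multiMul_le X (fun j => by rw [transpose_mul, transpose_transpose])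
      fun j => ?_
    rw [Matrix.mul_assoc, ← Matrix.mul_assoc (A j)ᵀ, (hA j).transpose_mul_self, Matrix.one_mul]
  · rw [Tensor.frobSq_eq_matFrobSq_unfold _ j, Tensor.unfold_modeMul,
      (hA j).matFrobSq_one_sub_mul_transpose_mul, Fintype.card_fin]
end

section
/- Let Q ∈ ℝ^{I×ℓ} have orthonormal columns and let P ∈ ℝ^{I×ℓ} consist of ℓ distinct columns of the I×I identity matrix such that PᵀQ is invertible, and set Π = Q(PᵀQ)⁻¹Pᵀ. Then the spectral norm of Π satisfies ‖Π‖₂ = ‖(PᵀQ)⁻¹‖₂. -/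
open MeasureTheory ProbabilityTheory BigOperators Matrix

/-!
The spectral norm `specNorm` is the ℓ²-operator norm: its square is the largest eigenvalue of
`A Aᴴ`, which for this positive semidefinite matrix is `‖A Aᴴ‖ = ‖A‖²` by the C⋆-identity.
With `Q` and `P` isometries (`QᵀQ = PᵀP = 1`), submultiplicativity gives `‖Q B Pᵀ‖ ≤ ‖B‖`,
and `B = Qᵀ (Q B Pᵀ) P` gives the reverse inequality.
-/

open scoped Matrix.Norms.L2Operator

theorem Tuple.isGreatest_range_comp_sort {α : Type*} [LinearOrder α] {n : ℕ} (f : Fin n → α)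
    (i : Fin n) (hi : (i : ℕ) = n - 1) : IsGreatest (Set.range f) ((f ∘ Tuple.sort f) i) := by
  refine ⟨⟨Tuple.sort f i, rfl⟩, ?_⟩
  rintro _ ⟨j, rfl⟩
  have hj : (Tuple.sort f).symm j ≤ i := Fin.le_def.mpr (by omega)
  simpa using Tuple.monotone_sort f hj

theorem pi_norm_eq_of_isGreatest_range {ι : Type*} [Fintype ι] {f : ι → ℝ} (hf : 0 ≤ f) {t : ℝ}
    (ht : IsGreatest (Set.range f) t) : ‖f‖ = t := by
  obtain ⟨⟨i, rfl⟩, hmax⟩ := ht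
  refine le_antisymm ((pi_norm_le_iff_of_nonneg (hf i)).2 fun j => ?_) ?_
  · rw [Real.norm_of_nonneg (hf j)]
    exact hmax ⟨j, rfl⟩
  · exact (Real.le_norm_self _).trans (norm_le_pi_norm f i)

namespace Matrix

section RCLike

variable {𝕜 m n k l : Type*} [RCLike 𝕜] [Fintype m] [Fintype n] [Fintype k] [Fintype l]

theorem IsHermitian.l2_opNorm_eq_norm_eigenvalues [DecidableEq n] {A : Matrix n n 𝕜}
    (hA : A.IsHermitian) : ‖A‖ = ‖hA.eigenvalues‖ := by
  conv_lhs => rw [hA.spectral_theorem]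
  rw [Unitary.conjStarAlgAut_apply, ← Unitary.coe_star, CStarRing.norm_mul_coe_unitary,
    CStarRing.norm_coe_unitary_mul, l2_opNorm_diagonal]
  simp [Pi.norm_def, Function.comp_def]

theorem l2_opNorm_one_le [DecidableEq n] : ‖(1 : Matrix n n 𝕜)‖ ≤ 1 := by
  rw [← diagonal_one, l2_opNorm_diagonal]
  exact (pi_norm_le_iff_of_nonneg zero_le_one).2 fun _ => norm_one.le

theorem l2_opNorm_le_one_of_conjTranspose_mul_self_eq_one [DecidableEq n] {Q : Matrix m n 𝕜}
    (hQ : Qᴴ * Q = 1) : ‖Q‖ ≤ 1 := by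
  have h : ‖Q‖ * ‖Q‖ ≤ 1 := by
    rw [← l2_opNorm_conjTranspose_mul_self, hQ]
    exact l2_opNorm_one_le
  nlinarith [norm_nonneg Q]

theorem l2_opNorm_mul_mul_le_of_le_one [DecidableEq n] [DecidableEq k] [DecidableEq l]
    {X : Matrix m n 𝕜} {Z : Matrix k l 𝕜} (hX : ‖X‖ ≤ 1) (hZ : ‖Z‖ ≤ 1) (Y : Matrix n k 𝕜) :
    ‖X * Y * Z‖ ≤ ‖Y‖ :=
  calc ‖X * Y * Z‖ ≤ ‖X‖ * ‖Y‖ * ‖Z‖ := by grw [l2_opNorm_mul, l2_opNorm_mul]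
    _ ≤ ‖Y‖ := mul_le_of_le_one_right (by positivity) hZ |>.trans
        (mul_le_of_le_one_left (norm_nonneg _) hX)

theorem l2_opNorm_mul_mul_conjTranspose [DecidableEq m] [DecidableEq n] [DecidableEq k]
    [DecidableEq l] {Q : Matrix m n 𝕜} {P : Matrix l k 𝕜} (hQ : Qᴴ * Q = 1) (hP : Pᴴ * P = 1)
    (B : Matrix n k 𝕜) : ‖Q * B * Pᴴ‖ = ‖B‖ := by
  have hQ1 := l2_opNorm_le_one_of_conjTranspose_mul_self_eq_one hQ
  have hP1 := l2_opNorm_le_one_of_conjTranspose_mul_self_eq_one hP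
  refine le_antisymm (l2_opNorm_mul_mul_le_of_le_one hQ1 (by rwa [l2_opNorm_conjTranspose]) B) ?_
  calc ‖B‖ = ‖Qᴴ * (Q * B * Pᴴ) * P‖ := by
        rw [← Matrix.mul_assoc, ← Matrix.mul_assoc, hQ, Matrix.one_mul, Matrix.mul_assoc, hP,
          Matrix.mul_one]
    _ ≤ ‖Q * B * Pᴴ‖ :=
        l2_opNorm_mul_mul_le_of_le_one (by rwa [l2_opNorm_conjTranspose]) hP1 _

end RCLike

theorem l2_opNorm_sq_eq_of_isGreatest_eigenvalues {m n : Type*} [Fintype m] [Fintype n]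
    [DecidableEq m] [DecidableEq n] (A : Matrix m n ℝ) {t : ℝ}
    (ht : IsGreatest (Set.range (isHermitian_mul_conjTranspose_self A).eigenvalues) t) :
    ‖A‖ ^ 2 = t := by
  rw [sq, ← l2_opNorm_conjTranspose, ← l2_opNorm_conjTranspose_mul_self,
    conjTranspose_conjTranspose,
    (isHermitian_mul_conjTranspose_self A).l2_opNorm_eq_norm_eigenvalues]
  exact pi_norm_eq_of_isGreatest_range (posSemidef_self_mul_conjTranspose A).eigenvalues_nonneg ht

end Matrix

theorem specNorm_eq_l2_opNorm {m n : Type*} [Fintype m] [Fintype n] [DecidableEq m]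
    [DecidableEq n] (A : Matrix m n ℝ) : specNorm A = ‖A‖ := by
  unfold specNorm singularValues
  split_ifs with hm
  · have htop := Tuple.isGreatest_range_comp_sort
      ((isHermitian_mul_conjTranspose_self A).eigenvalues ∘ (Fintype.equivFin m).symm)
      ⟨Fintype.card m - 1 - 0, by omega⟩ (Nat.sub_zero _)
    rw [EquivLike.range_comp] at htop
    dsimp only
    rw [← l2_opNorm_sq_eq_of_isGreatest_eigenvalues A htop, Real.sqrt_sq (norm_nonneg A)]
  · have : IsEmpty m := Fintype.card_eq_zero_iff.mp (by omega)
    rw [Subsingleton.elim A 0, norm_zero]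

theorem IsSelection.transpose_mul_self {a b : Type*} [Fintype a] [DecidableEq a] [DecidableEq b]
    {P : Matrix a b ℝ} (hP : IsSelection P) : Pᵀ * P = 1 := by
  obtain ⟨f, hf, hPf⟩ := hP
  ext i j
  simp [Matrix.mul_apply, hPf, Matrix.one_apply, hf.eq_iff, eq_comm]

theorem oblique_projector_spectral_norm_general
    (I ℓ : ℕ) (Q : Matrix (Fin I) (Fin ℓ) ℝ) (P : Matrix (Fin I) (Fin ℓ) ℝ)
    (hQ : Qᵀ * Q = 1) (hP : IsSelection P) :
    specNorm (Q * (Pᵀ * Q)⁻¹ * Pᵀ) = specNorm (Pᵀ * Q)⁻¹ := by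
  have hQ' : Qᴴ * Q = 1 := by rwa [conjTranspose_eq_transpose_of_trivial]
  have hP' : Pᴴ * P = 1 := by
    rw [conjTranspose_eq_transpose_of_trivial]
    exact hP.transpose_mul_self
  rw [specNorm_eq_l2_opNorm, specNorm_eq_l2_opNorm, ← conjTranspose_eq_transpose_of_trivial P]
  exact l2_opNorm_mul_mul_conjTranspose hQ' hP' _

/-- for `Q` with orthonormal columns and a selection operator `P` with
`PᵀQ` invertible, the oblique projector `Π = Q(PᵀQ)⁻¹Pᵀ` satisfies
`‖Π‖₂ = ‖(PᵀQ)⁻¹‖₂`. -/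
theorem oblique_projector_spectral_norm
    (I ℓ : ℕ) (Q : Matrix (Fin I) (Fin ℓ) ℝ) (P : Matrix (Fin I) (Fin ℓ) ℝ)
    (hQ : Qᵀ * Q = 1) (hP : IsSelection P) (hinv : IsUnit (Pᵀ * Q)) :
    specNorm (Q * (Pᵀ * Q)⁻¹ * Pᵀ) = specNorm (Pᵀ * Q)⁻¹ :=
  oblique_projector_spectral_norm_general I ℓ Q P hQ hP
end
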